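/- arXiv:1301.6443 — 2 statements merged into one kernel-verified Lean document; each statement's English description precedes it below -/
import Mathlib

section
/- Most nonexpansive mappings are super-regular: there exists a sequence (O_q) of subsets of the set N(X) of nonexpansive maps on X, each ρ-open in N(X) and ρ-dense in N(X), such that every T ∈ ⋂_q O_q is super-regular. -/
open RealInnerProductSpace Filter
open Topology

variable {X : Type*} [NormedAddCommGroup X] [InnerProductSpace ℝ X] [CompleteSpace X]

/-- `T` is nonexpansive. -/
def Nonexpansive (T : X → X) : Prop := ∀ x y : X, ‖T x - T y‖ ≤ ‖x - y‖

/-- `T` is firmly nonexpansive. -/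
def FirmlyNonexpansive (T : X → X) : Prop :=
  ∀ x y : X, ‖T x - T y‖ ^ 2 ≤ ⟪x - y, T x - T y⟫

/-- `‖T₁ - T₂‖ₙ = sup_{‖x‖ ≤ n} ‖T₁ x - T₂ x‖`. -/
noncomputable def ballSup (T₁ T₂ : X → X) (n : ℕ) : ℝ :=
  sSup {r : ℝ | ∃ x : X, ‖x‖ ≤ (n : ℝ) ∧ r = ‖T₁ x - T₂ x‖}

/-- The metric `ρ` on nonexpansive maps. -/
noncomputable def rho (T₁ T₂ : X → X) : ℝ :=
  ∑' n : ℕ, (1 / 2 ^ (n + 1)) *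
    (ballSup T₁ T₂ (n + 1) / (1 + ballSup T₁ T₂ (n + 1)))

/-- The metric `ρ̂` on firmly nonexpansive maps: `ρ̂(T₁,T₂) = ρ(2T₁ - Id, 2T₂ - Id)`. -/
noncomputable def rhoHat (T₁ T₂ : X → X) : ℝ :=
  rho (fun x => (2 : ℝ) • T₁ x - x) (fun x => (2 : ℝ) • T₂ x - x)

/-- `T` is super-regular with limit point `xT`. -/
def SuperRegularAt (T : X → X) (xT : X) : Prop :=
  ∀ s : ℝ, 0 < s → ∀ ε : ℝ, 0 < ε → ∃ N : ℕ, ∀ n ≥ N, ∀ x : X, ‖x‖ ≤ s → ‖T^[n] x - xT‖ < ε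

/-- `T` is super-regular. -/
def SuperRegular (T : X → X) : Prop := ∃ xT : X, SuperRegularAt T xT

/-- `T` is a (Banach) contraction. -/
def Contraction (T : X → X) : Prop :=
  ∃ l : ℝ, 0 ≤ l ∧ l < 1 ∧ ∀ x y : X, ‖T x - T y‖ ≤ l * ‖x - y‖

/- AUX START -/
lemma nonexp_of_lip {S : X → X} {l : ℝ} (hl : l ≤ 1)
    (h : ∀ x y : X, ‖S x - S y‖ ≤ l * ‖x - y‖) : Nonexpansive S :=
  fun x y => (h x y).trans (mul_le_of_le_one_left (norm_nonneg _) hl)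

lemma ballSup_bdd {T₁ T₂ : X → X} (h₁ : Nonexpansive T₁) (h₂ : Nonexpansive T₂) (n : ℕ) :
    BddAbove {r : ℝ | ∃ x : X, ‖x‖ ≤ (n : ℝ) ∧ r = ‖T₁ x - T₂ x‖} := by
  refine ⟨2 * n + ‖T₁ 0 - T₂ 0‖, ?_⟩
  rintro r ⟨x, hx, rfl⟩
  have h4 := dist_triangle4 (T₁ x) (T₁ 0) (T₂ 0) (T₂ x)
  have e1 := h₁ x 0
  have e2 := h₂ 0 x
  simp only [dist_eq_norm, sub_zero, zero_sub, norm_neg] at h4 e1 e2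
  linarith

lemma le_ballSup {T₁ T₂ : X → X} (h₁ : Nonexpansive T₁) (h₂ : Nonexpansive T₂) (n : ℕ)
    {x : X} (hx : ‖x‖ ≤ (n : ℝ)) : ‖T₁ x - T₂ x‖ ≤ ballSup T₁ T₂ n :=
  le_csSup (ballSup_bdd h₁ h₂ n) ⟨x, hx, rfl⟩

lemma ballSup_le {T₁ T₂ : X → X} (n : ℕ) {B : ℝ}
    (h : ∀ x : X, ‖x‖ ≤ (n : ℝ) → ‖T₁ x - T₂ x‖ ≤ B) : ballSup T₁ T₂ n ≤ B := by
  refine csSup_le ⟨‖T₁ 0 - T₂ 0‖, 0, by simp, rfl⟩ ?_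
  rintro r ⟨x, hx, rfl⟩
  exact h x hx

lemma ballSup_nonneg {T₁ T₂ : X → X} (h₁ : Nonexpansive T₁) (h₂ : Nonexpansive T₂) (n : ℕ) :
    0 ≤ ballSup T₁ T₂ n :=
  (norm_nonneg _).trans (le_ballSup h₁ h₂ n (x := 0) (by simp))

lemma rho_term_nonneg {T₁ T₂ : X → X} (h₁ : Nonexpansive T₁) (h₂ : Nonexpansive T₂) (n : ℕ) :
    (0:ℝ) ≤ (1 / 2 ^ (n + 1)) *
      (ballSup T₁ T₂ (n + 1) / (1 + ballSup T₁ T₂ (n + 1))) := by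
  have hb := ballSup_nonneg h₁ h₂ (n + 1)
  have : (0:ℝ) ≤ ballSup T₁ T₂ (n+1) / (1 + ballSup T₁ T₂ (n+1)) :=
    div_nonneg hb (by linarith)
  exact mul_nonneg (by positivity) this

lemma rho_summable {T₁ T₂ : X → X} (h₁ : Nonexpansive T₁) (h₂ : Nonexpansive T₂) :
    Summable (fun n : ℕ => (1 / 2 ^ (n + 1) : ℝ) *
      (ballSup T₁ T₂ (n + 1) / (1 + ballSup T₁ T₂ (n + 1)))) := by
  have hg : Summable (fun n : ℕ => ((1:ℝ)/2)^(n+1)) :=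
    (summable_nat_add_iff 1).mpr summable_geometric_two
  refine Summable.of_nonneg_of_le (fun n => rho_term_nonneg h₁ h₂ n) (fun n => ?_) hg
  have hb := ballSup_nonneg h₁ h₂ (n + 1)
  have h1 : ballSup T₁ T₂ (n+1) / (1 + ballSup T₁ T₂ (n+1)) ≤ 1 := by
    rw [div_le_one (by linarith)]; linarith
  calc (1 / 2 ^ (n + 1) : ℝ) * (ballSup T₁ T₂ (n + 1) / (1 + ballSup T₁ T₂ (n + 1)))
      ≤ (1 / 2 ^ (n + 1) : ℝ) * 1 := mul_le_mul_of_nonneg_left h1 (by positivity)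
    _ = ((1:ℝ)/2)^(n+1) := by rw [mul_one, ← one_div_pow]

lemma term_le_rho {T₁ T₂ : X → X} (h₁ : Nonexpansive T₁) (h₂ : Nonexpansive T₂) (m : ℕ) :
    (1 / 2 ^ (m + 1) : ℝ) * (ballSup T₁ T₂ (m + 1) / (1 + ballSup T₁ T₂ (m + 1)))
      ≤ rho T₁ T₂ :=
  Summable.le_tsum (rho_summable h₁ h₂) m (fun n _ => rho_term_nonneg h₁ h₂ n)

lemma frac_lt {a c : ℝ} (ha : 0 ≤ a) (hc : 0 ≤ c) (h : a / (1 + a) < c / (1 + c)) : a < c := by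
  by_contra hn
  push_neg at hn
  have h1 : (0:ℝ) < 1 + a := by linarith
  have h2 : (0:ℝ) < 1 + c := by linarith
  rw [div_lt_div_iff₀ h1 h2] at h
  nlinarith

lemma iterate_bound {T S : X → X} {l η mr : ℝ} {xS : X}
    (hT : Nonexpansive T) (hlip : ∀ x y : X, ‖S x - S y‖ ≤ l * ‖x - y‖)
    (hl0 : 0 ≤ l) (hl1 : l < 1) (hfix : S xS = xS) (hη : 0 ≤ η)
    (hball : ∀ z : X, ‖z‖ ≤ mr → ‖T z - S z‖ ≤ η)
    {x : X} (hm : ‖xS‖ + ‖x - xS‖ + η / (1 - l) ≤ mr) :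
    ∀ n : ℕ, ‖T^[n] x - xS‖ ≤ l ^ n * ‖x - xS‖ + η / (1 - l) := by
  have h1l : (0:ℝ) < 1 - l := by linarith
  have hq : 0 ≤ η / (1 - l) := div_nonneg hη h1l.le
  intro n
  induction n with
  | zero =>
    simp only [Function.iterate_zero, id_eq, pow_zero, one_mul]
    linarith
  | succ n ih =>
    set z := T^[n] x with hz
    have hzx : ‖z‖ ≤ ‖xS‖ + ‖z - xS‖ := by
      have he : xS + (z - xS) = z := by abel
      calc ‖z‖ = ‖xS + (z - xS)‖ := by rw [he]
        _ ≤ ‖xS‖ + ‖z - xS‖ := norm_add_le _ _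
    have hpow : l ^ n ≤ 1 := pow_le_one₀ hl0 hl1.le
    have hln : l ^ n * ‖x - xS‖ ≤ ‖x - xS‖ :=
      mul_le_of_le_one_left (norm_nonneg _) hpow
    have hzm : ‖z‖ ≤ mr := by linarith
    have step : ‖T z - xS‖ ≤ η + l * ‖z - xS‖ := by
      have h3 := dist_triangle (T z) (S z) xS
      simp only [dist_eq_norm] at h3
      have h4 : ‖S z - xS‖ ≤ l * ‖z - xS‖ := by
        have := hlip z xS
        rwa [hfix] at this
      have h5 := hball z hzm
      linarith
    have key : η + l * (l ^ n * ‖x - xS‖ + η / (1 - l)) =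
        l ^ (n+1) * ‖x - xS‖ + η / (1 - l) := by
      field_simp
      ring
    have h6 : l * ‖z - xS‖ ≤ l * (l ^ n * ‖x - xS‖ + η / (1 - l)) :=
      mul_le_mul_of_nonneg_left ih hl0
    rw [Function.iterate_succ_apply', ← hz]
    linarith

/-- Membership predicate for the open dense sets. -/
def GoodAt (q : ℕ) (T : X → X) : Prop :=
  Nonexpansive T ∧ ∃ S : X → X, ∃ xS : X, ∃ l η : ℝ,
    0 ≤ l ∧ l < 1 ∧ (∀ x y : X, ‖S x - S y‖ ≤ l * ‖x - y‖) ∧ S xS = xS ∧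
    0 < η ∧ η / (1 - l) ≤ 1 / ((q : ℝ) + 1) ∧
    ∃ m : ℕ, 2 * ‖xS‖ + (q : ℝ) + 2 ≤ (m : ℝ) + 1 ∧ ballSup T S (m + 1) < η

lemma good_open (q : ℕ) {T : X → X} (hT : GoodAt q T) :
    ∃ r > (0:ℝ), ∀ S' : X → X, Nonexpansive S' → rho S' T < r → GoodAt q S' := by
  obtain ⟨hTne, S, xS, l, η, hl0, hl1, hlip, hfix, hη, hηq, m, hmq, hb⟩ := hT
  have hSne : Nonexpansive S := nonexp_of_lip hl1.le hlip
  have hb0 : 0 ≤ ballSup T S (m+1) := ballSup_nonneg hTne hSne (m+1)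
  set γ := η - ballSup T S (m+1) with hγdef
  have hγ : 0 < γ := by simp only [hγdef]; linarith
  refine ⟨(1/2^(m+1)) * (γ/(1+γ)), by positivity, fun S' hS' hrho => ?_⟩
  have hb' : 0 ≤ ballSup S' T (m+1) := ballSup_nonneg hS' hTne _
  have ht := term_le_rho hS' hTne m
  have hlt : ballSup S' T (m+1) / (1 + ballSup S' T (m+1)) < γ/(1+γ) := by
    have h2 := lt_of_le_of_lt ht hrho
    have hp : (0:ℝ) < 1/2^(m+1) := by positivity
    exact (mul_lt_mul_iff_right₀ hp).mp h2
  have hb'γ : ballSup S' T (m+1) < γ := frac_lt hb' hγ.le hlt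
  have htri : ballSup S' S (m+1) ≤ ballSup S' T (m+1) + ballSup T S (m+1) := by
    apply ballSup_le
    intro x hx
    have h3 := dist_triangle (S' x) (T x) (S x)
    simp only [dist_eq_norm] at h3
    exact h3.trans (add_le_add (le_ballSup hS' hTne _ hx) (le_ballSup hTne hSne _ hx))
  exact ⟨hS', S, xS, l, η, hl0, hl1, hlip, hfix, hη, hηq, m, hmq, by linarith⟩

lemma good_dense (q : ℕ) {T : X → X} (hT : Nonexpansive T) {ε : ℝ} (hε : 0 < ε) :
    ∃ S : X → X, GoodAt q S ∧ rho S T < ε := by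
  haveI : Nonempty X := ⟨0⟩
  set c := ‖T 0‖ with hc
  have hc0 : 0 ≤ c := norm_nonneg _
  set θ := min 1 (ε / (c + 3)) with hθdef
  have hθ0 : 0 < θ := lt_min one_pos (by positivity)
  have hθ1 : θ ≤ 1 := min_le_left _ _
  have hθε : θ * (c + 2) < ε := by
    have h1 : θ ≤ ε/(c+3) := min_le_right _ _
    have h2 : (0:ℝ) < c + 3 := by linarith
    rw [le_div_iff₀ h2] at h1
    nlinarith
  set S : X → X := fun x => (1 - θ) • T x with hSdef
  have hlip : ∀ x y : X, ‖S x - S y‖ ≤ (1 - θ) * ‖x - y‖ := by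
    intro x y
    have h1 : S x - S y = (1-θ) • (T x - T y) := by simp [hSdef, smul_sub]
    rw [h1, norm_smul, Real.norm_eq_abs, abs_of_nonneg (by linarith : (0:ℝ) ≤ 1 - θ)]
    exact mul_le_mul_of_nonneg_left (hT x y) (by linarith)
  have hSne : Nonexpansive S := nonexp_of_lip (by linarith) hlip
  obtain ⟨xS, hfix⟩ : ∃ xS : X, S xS = xS := by
    set K : NNReal := ⟨1 - θ, by linarith⟩ with hK
    have hlipK : LipschitzWith K S := LipschitzWith.of_dist_le_mul (fun x y => by
      rw [dist_eq_norm, dist_eq_norm]; exact hlip x y)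
    have hK1 : K < 1 := by
      rw [← NNReal.coe_lt_coe, NNReal.coe_one]
      show (1 - θ : ℝ) < 1
      linarith
    have hcon : ContractingWith K S := ⟨hK1, hlipK⟩
    exact ⟨ContractingWith.fixedPoint S hcon, hcon.fixedPoint_isFixedPt⟩
  set η := θ * (1/((q:ℝ)+1)) with hηdef
  have hqpos : (0:ℝ) < (q:ℝ)+1 := by positivity
  have hη : 0 < η := by positivity
  have hηq : η / (1 - (1-θ)) ≤ 1/((q:ℝ)+1) := by
    have h1 : (1:ℝ) - (1-θ) = θ := by ring
    rw [h1, hηdef, mul_comm θ, mul_div_assoc, div_self hθ0.ne', mul_one]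
  set m : ℕ := ⌈2*‖xS‖ + (q:ℝ) + 2⌉₊ with hm
  have hmq : 2*‖xS‖ + (q:ℝ) + 2 ≤ (m:ℝ) + 1 := (Nat.le_ceil _).trans (by linarith)
  have hbSS : ballSup S S (m+1) < η := by
    refine lt_of_le_of_lt (ballSup_le (m+1) (fun x _ => ?_)) hη
    simp
  have hgood : GoodAt q S :=
    ⟨hSne, S, xS, 1-θ, η, by linarith, by linarith, hlip, hfix, hη, hηq, m, hmq, hbSS⟩
  -- now estimate rho S T
  have hpt : ∀ n : ℕ, ballSup S T (n+1) ≤ θ*(c + ((n:ℝ)+1)) := by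
    intro n
    apply ballSup_le
    intro x hx
    have h1 : S x - T x = -(θ • T x) := by
      simp only [hSdef]
      module
    rw [h1, norm_neg, norm_smul, Real.norm_eq_abs, abs_of_nonneg hθ0.le]
    have h2 : ‖T x‖ ≤ ‖x‖ + c := by
      have h3 : ‖T x‖ ≤ ‖T x - T 0‖ + ‖T 0‖ := by
        simpa using norm_add_le (T x - T 0) (T 0)
      have h4 := hT x 0
      simp only [sub_zero] at h4
      linarith
    have hx' : ‖x‖ ≤ (n:ℝ)+1 := by push_cast at hx; linarith
    nlinarith
  have hgeo : Summable (fun n : ℕ => ((1:ℝ)/2)^(n+1)) :=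
    (summable_nat_add_iff 1).mpr summable_geometric_two
  have hgeo1 : ∑' n : ℕ, ((1:ℝ)/2)^(n+1) = 1 := by
    calc ∑' n : ℕ, ((1:ℝ)/2)^(n+1) = ∑' n : ℕ, ((1:ℝ)/2)^n * (1/2) := by
          apply tsum_congr; intro n; rw [pow_succ]
      _ = (∑' n : ℕ, ((1:ℝ)/2)^n) * (1/2) := tsum_mul_right
      _ = 1 := by rw [tsum_geometric_two]; norm_num
  have hsum_n : Summable (fun n : ℕ => (n:ℝ) * ((1:ℝ)/2)^n) := by
    simpa using summable_pow_mul_geometric_of_norm_lt_one 1 (r := (1/2:ℝ)) (by norm_num)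
  have htsum_n : ∑' n : ℕ, (n:ℝ) * ((1:ℝ)/2)^n = 2 := by
    rw [tsum_coe_mul_geometric_of_norm_lt_one (by norm_num : ‖(1/2:ℝ)‖ < 1)]
    norm_num
  set g : ℕ → ℝ := fun n => θ*(c+1)*(((1:ℝ)/2)^(n+1)) + (θ*(1/2))*((n:ℝ)*((1:ℝ)/2)^n)
    with hg
  have hsumg : Summable g := (hgeo.mul_left _).add (hsum_n.mul_left _)
  have htsumg : ∑' n, g n = θ*(c+2) := by
    rw [hg, Summable.tsum_add (hgeo.mul_left _) (hsum_n.mul_left _), tsum_mul_left, tsum_mul_left,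
      hgeo1, htsum_n]
    ring
  have hle : ∀ n : ℕ, (1 / 2 ^ (n + 1) : ℝ) *
      (ballSup S T (n + 1) / (1 + ballSup S T (n + 1))) ≤ g n := by
    intro n
    have hb0 := ballSup_nonneg hSne hT (n+1)
    have hgn : g n = ((1:ℝ)/2)^(n+1) * (θ*(c + ((n:ℝ)+1))) := by
      rw [hg]
      simp only []
      rw [pow_succ]
      ring
    have hfr : ballSup S T (n+1) / (1 + ballSup S T (n+1)) ≤ θ*(c + ((n:ℝ)+1)) :=
      (div_le_self hb0 (by linarith)).trans (hpt n)
    calc (1 / 2 ^ (n + 1) : ℝ) * (ballSup S T (n + 1) / (1 + ballSup S T (n + 1)))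
        = ((1:ℝ)/2)^(n+1) * (ballSup S T (n + 1) / (1 + ballSup S T (n + 1))) := by
          rw [← one_div_pow]
      _ ≤ ((1:ℝ)/2)^(n+1) * (θ*(c + ((n:ℝ)+1))) :=
          mul_le_mul_of_nonneg_left hfr (by positivity)
      _ = g n := hgn.symm
  have hrho : rho S T ≤ θ*(c+2) := by
    rw [rho, ← htsumg]
    exact Summable.tsum_le_tsum hle (rho_summable hSne hT) hsumg
  exact ⟨S, hgood, lt_of_le_of_lt hrho hθε⟩

lemma four_div_lt {ε : ℝ} (hε : 0 < ε) {q : ℕ} (hq : 4/ε < (q:ℝ)) :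
    4/((q:ℝ)+1) < ε := by
  have hq1 : (0:ℝ) < (q:ℝ)+1 := by positivity
  rw [div_lt_iff₀ hq1]
  have := (div_lt_iff₀ hε).mp (hq.trans (lt_add_one _))
  linarith

lemma good_superRegular {T : X → X} (h : ∀ q : ℕ, GoodAt q T) : SuperRegular T := by
  have hTne : Nonexpansive T := (h 0).1
  choose S xS l η hl0 hl1 hlip hfix hη hηq m hmq hb using fun q => (h q).2
  have key : ∀ q : ℕ, ∃ N : ℕ, ∀ n ≥ N, ∀ x : X, ‖x‖ ≤ (q:ℝ) →
      ‖T^[n] x - xS q‖ < 2/((q:ℝ)+1) := by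
    intro q
    have h1l : (0:ℝ) < 1 - l q := by linarith [hl1 q]
    have hqpos : (0:ℝ) < (q:ℝ)+1 := by positivity
    have hSqne : Nonexpansive (S q) := nonexp_of_lip (hl1 q).le (hlip q)
    have hball : ∀ z : X, ‖z‖ ≤ ((m q : ℝ) + 1) → ‖T z - S q z‖ ≤ η q := by
      intro z hz
      have hz' : ‖z‖ ≤ ((m q + 1 : ℕ):ℝ) := by push_cast; linarith
      exact (le_ballSup hTne hSqne _ hz').trans (hb q).le
    have htend : Tendsto (fun n : ℕ => (l q)^n * ((q:ℝ) + ‖xS q‖)) atTop (𝓝 0) := by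
      simpa using
        (tendsto_pow_atTop_nhds_zero_of_lt_one (hl0 q) (hl1 q)).mul_const ((q:ℝ) + ‖xS q‖)
    have hev : ∀ᶠ n in atTop, (l q)^n * ((q:ℝ) + ‖xS q‖) < 1/((q:ℝ)+1) :=
      htend.eventually_lt_const (by positivity)
    obtain ⟨N, hNp⟩ := eventually_atTop.mp hev
    refine ⟨N, fun n hn x hx => ?_⟩
    have hD : ‖x - xS q‖ ≤ (q:ℝ) + ‖xS q‖ := (norm_sub_le _ _).trans (by linarith)
    have hle1 : η q/(1 - l q) ≤ 1/((q:ℝ)+1) := hηq q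
    have h2 : 1/((q:ℝ)+1) ≤ 1 := by
      rw [div_le_one hqpos]; linarith
    have hmx : ‖xS q‖ + ‖x - xS q‖ + η q/(1 - l q) ≤ (m q : ℝ) + 1 := by
      linarith [hmq q]
    have hib := iterate_bound hTne (hlip q) (hl0 q) (hl1 q) (hfix q) (hη q).le hball hmx n
    have h3 : (l q)^n * ‖x - xS q‖ ≤ (l q)^n * ((q:ℝ)+‖xS q‖) :=
      mul_le_mul_of_nonneg_left hD (pow_nonneg (hl0 q) n)
    have h4 := hNp n hn
    have h5 : 2/((q:ℝ)+1) = 1/((q:ℝ)+1) + 1/((q:ℝ)+1) := by ring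
    linarith
  choose N hN using key
  set u : ℕ → X := fun n => T^[n] 0 with hu
  have hcau : CauchySeq u := by
    rw [Metric.cauchySeq_iff]
    intro ε hε
    obtain ⟨q, hq⟩ := exists_nat_gt (4/ε)
    refine ⟨N q, fun a ha b hb' => ?_⟩
    have h0 : ‖(0:X)‖ ≤ (q:ℝ) := by simp
    have ha' := hN q a ha 0 h0
    have hb'' := hN q b hb' 0 h0
    have htr : dist (u a) (u b) ≤ ‖u a - xS q‖ + ‖u b - xS q‖ := by
      rw [dist_eq_norm]
      calc ‖u a - u b‖ ≤ ‖u a - xS q‖ + ‖xS q - u b‖ := by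
            have h3 := dist_triangle (u a) (xS q) (u b)
            simpa [dist_eq_norm] using h3
        _ = ‖u a - xS q‖ + ‖u b - xS q‖ := by rw [norm_sub_rev (xS q)]
    have hfε := four_div_lt hε hq
    have : (2:ℝ)/((q:ℝ)+1) + 2/((q:ℝ)+1) = 4/((q:ℝ)+1) := by ring
    linarith
  obtain ⟨xT, hxT⟩ := cauchySeq_tendsto_of_complete hcau
  have hclose : ∀ q : ℕ, ‖xT - xS q‖ ≤ 2/((q:ℝ)+1) := by
    intro q
    have h1 : Tendsto (fun n => ‖u n - xS q‖) atTop (𝓝 ‖xT - xS q‖) :=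
      (hxT.sub tendsto_const_nhds).norm
    refine le_of_tendsto h1 ?_
    filter_upwards [eventually_ge_atTop (N q)] with n hn
    exact (hN q n hn 0 (by simp)).le
  refine ⟨xT, fun s hs ε hε => ?_⟩
  obtain ⟨q, hq⟩ := exists_nat_gt (max s (4/ε))
  have hqs : s ≤ (q:ℝ) := (le_max_left _ _).trans hq.le
  have hqe : 4/((q:ℝ)+1) < ε := four_div_lt hε ((le_max_right s (4/ε)).trans_lt hq)
  refine ⟨N q, fun n hn x hx => ?_⟩
  have h1 := hN q n hn x (hx.trans hqs)
  have h2 := hclose q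
  have htr : ‖T^[n] x - xT‖ ≤ ‖T^[n] x - xS q‖ + ‖xT - xS q‖ := by
    calc ‖T^[n] x - xT‖ ≤ ‖T^[n] x - xS q‖ + ‖xS q - xT‖ := by
          have h3 := dist_triangle (T^[n] x) (xS q) xT
          simpa [dist_eq_norm] using h3
      _ = ‖T^[n] x - xS q‖ + ‖xT - xS q‖ := by rw [norm_sub_rev (xS q)]
  have : (2:ℝ)/((q:ℝ)+1) + 2/((q:ℝ)+1) = 4/((q:ℝ)+1) := by ring
  linarith
/- AUX END -/

/-- most nonexpansive maps are super-regular. -/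
theorem generic_superRegular_nonexpansive :
    ∃ O : ℕ → Set (X → X),
      (∀ q, O q ⊆ {T : X → X | Nonexpansive T}) ∧
      (∀ q, ∀ T ∈ O q, ∃ r > (0 : ℝ), ∀ S : X → X, Nonexpansive S → rho S T < r → S ∈ O q) ∧
      (∀ q, ∀ T : X → X, Nonexpansive T → ∀ ε : ℝ, 0 < ε → ∃ S ∈ O q, rho S T < ε) ∧
      (∀ T ∈ ⋂ q, O q, SuperRegular T) := by
  refine ⟨fun q => {T | GoodAt q T}, fun q T hT => hT.1,
    fun q T hT => good_open q hT,
    fun q T hT ε hε => ?_,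
    fun T hT => good_superRegular (fun q => Set.mem_iInter.mp hT q)⟩
  obtain ⟨S, hS, hrho⟩ := good_dense q hT hε
  exact ⟨S, hS, hrho⟩
end

section
/- Generically, nonexpansive mappings almost have fixed points: the set G := {T : X → X nonexpansive : 0 belongs to the norm closure of the range of Id − T, i.e., for every ε > 0 there is x ∈ X with ‖x − Tx‖ < ε} is a dense G_δ in (N(X), ρ): there exists a sequence (O_n) of subsets of N(X), each ρ-open in N(X) and ρ-dense in N(X), with G = ⋂_n O_n. -/
open RealInnerProductSpace Filter

variable {X : Type*} [NormedAddCommGroup X] [InnerProductSpace ℝ X] [CompleteSpace X]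

/-!
Openness: `ρ(S, T)` dominates `2^{-(m+1)} f(‖S - T‖_{m+1})` with `f(a) = a / (1 + a)` increasing,
so a ρ-close `S` is uniformly close to `T` on the ball containing a point of small displacement for
`T`, and that point still has small displacement for `S`.
Density: `x ↦ (1 - t) T x + t T 0` is a `(1 - t)`-contraction, so it has a fixed point by Banach's
theorem, and it differs from `T` at `x` by `t ‖T x - T 0‖ ≤ t ‖x‖`; since
`∑ (k + 1) 2^{-(k+1)} = 2` this puts it within ρ-distance `2t` of `T`.
-/

section Rho

variable {E : Type*} [NormedAddCommGroup E]

lemma ballSup_nonneg_s18 (S T : E → E) (n : ℕ) : 0 ≤ ballSup S T n :=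
  Real.sSup_nonneg (by rintro r ⟨x, -, rfl⟩; exact norm_nonneg _)

lemma ballSup_le_s18 {S T : E → E} {n : ℕ} {C : ℝ}
    (h : ∀ x : E, ‖x‖ ≤ n → ‖S x - T x‖ ≤ C) : ballSup S T n ≤ C :=
  csSup_le ⟨_, 0, by simp, rfl⟩ (by rintro r ⟨x, hx, rfl⟩; exact h x hx)

lemma Nonexpansive.norm_sub_le_ballSup {S T : E → E} (hS : Nonexpansive S)
    (hT : Nonexpansive T) {n : ℕ} {x : E} (hx : ‖x‖ ≤ n) : ‖S x - T x‖ ≤ ballSup S T n := by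
  refine le_csSup ⟨2 * n + ‖S 0 - T 0‖, ?_⟩ ⟨x, hx, rfl⟩
  rintro r ⟨y, hy, rfl⟩
  have hSy : ‖S y - S 0‖ ≤ ‖y‖ := by simpa using hS y 0
  have hTy : ‖T 0 - T y‖ ≤ ‖y‖ := by simpa [norm_sub_rev] using hT 0 y
  calc ‖S y - T y‖ ≤ ‖S y - S 0‖ + ‖S 0 - T 0‖ + ‖T 0 - T y‖ := by
        simpa only [dist_eq_norm] using dist_triangle4 (S y) (S 0) (T 0) (T y)
    _ ≤ 2 * n + ‖S 0 - T 0‖ := by linarith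

lemma rho_term_nonneg_s18 (S T : E → E) (n : ℕ) :
    0 ≤ (1 / 2 ^ (n + 1) : ℝ) * (ballSup S T (n + 1) / (1 + ballSup S T (n + 1))) := by
  have := ballSup_nonneg_s18 S T (n + 1)
  positivity

lemma rho_summable_s18 (S T : E → E) :
    Summable fun n : ℕ ↦ (1 / 2 ^ (n + 1) : ℝ) *
      (ballSup S T (n + 1) / (1 + ballSup S T (n + 1))) := by
  refine .of_nonneg_of_le (rho_term_nonneg_s18 S T) (fun n ↦ ?_)
    (summable_geometric_two.comp_injective (add_left_injective 1))
  have := ballSup_nonneg_s18 S T (n + 1)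
  have hfrac : ballSup S T (n + 1) / (1 + ballSup S T (n + 1)) ≤ 1 :=
    (div_le_one (by linarith)).2 (by linarith)
  exact (mul_le_of_le_one_right (by positivity) hfrac).trans_eq (one_div_pow 2 (n + 1)).symm

lemma ballSup_lt_of_rho_lt {S T : E → E} {m : ℕ} {δ : ℝ} (hδ : 0 ≤ δ)
    (h : rho S T < 1 / 2 ^ (m + 1) * (δ / (1 + δ))) : ballSup S T (m + 1) < δ := by
  have hb := ballSup_nonneg_s18 S T (m + 1)
  have hterm : 1 / 2 ^ (m + 1) * (ballSup S T (m + 1) / (1 + ballSup S T (m + 1))) ≤ rho S T :=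
    (rho_summable_s18 S T).le_tsum m fun k _ ↦ rho_term_nonneg_s18 S T k
  have hfrac := lt_of_mul_lt_mul_left (hterm.trans_lt h) (by positivity)
  rw [div_lt_div_iff₀ (by linarith) (by linarith)] at hfrac
  nlinarith

lemma hasSum_succ_mul_half_pow :
    HasSum (fun k : ℕ ↦ ((k : ℝ) + 1) * (1 / 2) ^ (k + 1)) 2 := by
  have h := hasSum_coe_mul_geometric_of_norm_lt_one (𝕜 := ℝ) (r := 1 / 2) (by norm_num)
  rw [← hasSum_nat_add_iff' 1] at h
  norm_num at h
  exact h

lemma rho_le_of_ballSup_le {S T : E → E} {c : ℝ}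
    (h : ∀ k : ℕ, ballSup S T k ≤ c * k) : rho S T ≤ 2 * c := by
  refine hasSum_le (fun k ↦ ?_) (rho_summable_s18 S T).hasSum (hasSum_succ_mul_half_pow.mul_right c)
  have hb := ballSup_nonneg_s18 S T (k + 1)
  have hfrac : ballSup S T (k + 1) / (1 + ballSup S T (k + 1)) ≤ c * ((k : ℝ) + 1) := by
    refine (div_le_self hb (by linarith)).trans ?_
    exact_mod_cast h (k + 1)
  calc 1 / 2 ^ (k + 1) * (ballSup S T (k + 1) / (1 + ballSup S T (k + 1)))
      ≤ 1 / 2 ^ (k + 1) * (c * ((k : ℝ) + 1)) := by gcongr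
    _ = ((k : ℝ) + 1) * (1 / 2) ^ (k + 1) * c := by rw [div_pow, one_pow]; ring

end Rho

section Shrink

variable {E : Type*} [NormedAddCommGroup E] [NormedSpace ℝ E]

def shrinkMap (T : E → E) (t : ℝ) (x : E) : E := (1 - t) • T x + t • T 0

lemma shrinkMap_sub_shrinkMap (T : E → E) (t : ℝ) (x y : E) :
    shrinkMap T t x - shrinkMap T t y = (1 - t) • (T x - T y) := by
  simp only [shrinkMap]; module

lemma shrinkMap_sub_self (T : E → E) (t : ℝ) (x : E) :
    shrinkMap T t x - T x = t • (T 0 - T x) := by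
  simp only [shrinkMap]; module

variable {T : E → E} {t : ℝ}

lemma Nonexpansive.norm_shrinkMap_sub_le (hT : Nonexpansive T) (ht : t ≤ 1) (x y : E) :
    ‖shrinkMap T t x - shrinkMap T t y‖ ≤ (1 - t) * ‖x - y‖ := by
  rw [shrinkMap_sub_shrinkMap, norm_smul, Real.norm_of_nonneg (by linarith)]
  exact mul_le_mul_of_nonneg_left (hT x y) (by linarith)

lemma nonexpansive_shrinkMap (hT : Nonexpansive T) (ht₀ : 0 ≤ t) (ht₁ : t ≤ 1) :
    Nonexpansive (shrinkMap T t) := fun x y ↦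
  (hT.norm_shrinkMap_sub_le ht₁ x y).trans
    (mul_le_of_le_one_left (norm_nonneg _) (by linarith))

lemma Nonexpansive.exists_fixedPoint_shrinkMap [CompleteSpace E] (hT : Nonexpansive T)
    (ht₀ : 0 < t) (ht₁ : t ≤ 1) : ∃ x, shrinkMap T t x = x := by
  have hK : ContractingWith ⟨1 - t, by linarith⟩ (shrinkMap T t) :=
    ⟨show (1 - t : ℝ) < 1 by linarith, LipschitzWith.of_dist_le_mul fun x y ↦ by
      rw [dist_eq_norm, dist_eq_norm]; exact hT.norm_shrinkMap_sub_le ht₁ x y⟩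
  exact ⟨hK.fixedPoint, hK.fixedPoint_isFixedPt⟩

lemma Nonexpansive.rho_shrinkMap_le (hT : Nonexpansive T) (ht : 0 ≤ t) :
    rho (shrinkMap T t) T ≤ 2 * t :=
  rho_le_of_ballSup_le fun _ ↦ ballSup_le_s18 fun x hx ↦ by
    rw [shrinkMap_sub_self, norm_smul, Real.norm_of_nonneg ht]
    exact mul_le_mul_of_nonneg_left ((by simpa using hT 0 x : ‖T 0 - T x‖ ≤ ‖x‖).trans hx) ht

end Shrink

section Generic

variable {E : Type*} [NormedAddCommGroup E]

def IsRhoOpen (O : Set (E → E)) : Prop :=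
  ∀ T ∈ O, ∃ r > (0 : ℝ), ∀ S : E → E, Nonexpansive S → rho S T < r → S ∈ O

def IsRhoDense (O : Set (E → E)) : Prop :=
  ∀ T : E → E, Nonexpansive T → ∀ ε : ℝ, 0 < ε → ∃ S ∈ O, rho S T < ε

def almostFixedNonexpansive (ε : ℝ) : Set (E → E) :=
  {T | Nonexpansive T ∧ ∃ x, ‖x - T x‖ < ε}

lemma isRhoOpen_almostFixedNonexpansive (ε : ℝ) :
    IsRhoOpen (almostFixedNonexpansive (E := E) ε) := by
  rintro T ⟨hT, x, hx⟩
  set δ := ε - ‖x - T x‖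
  obtain ⟨m, hm⟩ : ∃ m : ℕ, ‖x‖ ≤ m + 1 :=
    ⟨⌈‖x‖⌉₊, (Nat.le_ceil _).trans (by linarith)⟩
  refine ⟨1 / 2 ^ (m + 1) * (δ / (1 + δ)), by positivity, fun S hS hST ↦ ⟨hS, x, ?_⟩⟩
  have hSx : ‖T x - S x‖ < δ := by
    rw [norm_sub_rev]
    exact (hS.norm_sub_le_ballSup hT (by exact_mod_cast hm)).trans_lt
      (ballSup_lt_of_rho_lt (by linarith) hST)
  calc ‖x - S x‖ ≤ ‖x - T x‖ + ‖T x - S x‖ := norm_sub_le_norm_sub_add_norm_sub _ _ _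
    _ < ε := by linarith

lemma isRhoDense_almostFixedNonexpansive [NormedSpace ℝ E] [CompleteSpace E] {ε : ℝ}
    (hε : 0 < ε) : IsRhoDense (almostFixedNonexpansive (E := E) ε) := by
  intro T hT δ hδ
  set t := min 1 (δ / 4)
  have ht₀ : 0 < t := lt_min one_pos (by positivity)
  have ht₁ : t ≤ 1 := min_le_left _ _
  obtain ⟨x, hx⟩ := hT.exists_fixedPoint_shrinkMap ht₀ ht₁
  refine ⟨shrinkMap T t,
    ⟨nonexpansive_shrinkMap hT ht₀.le ht₁, x, by rwa [hx, sub_self, norm_zero]⟩, ?_⟩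
  calc rho (shrinkMap T t) T ≤ 2 * t := hT.rho_shrinkMap_le ht₀.le
    _ ≤ 2 * (δ / 4) := by gcongr; exact min_le_right _ _
    _ < δ := by linarith

lemma iInter_almostFixedNonexpansive :
    ⋂ n : ℕ, almostFixedNonexpansive (E := E) (1 / (n + 1)) =
      {T | Nonexpansive T ∧ ∀ ε : ℝ, 0 < ε → ∃ x, ‖x - T x‖ < ε} := by
  ext T
  simp only [almostFixedNonexpansive, Set.mem_iInter, Set.mem_ofPred_eq]
  constructor
  · intro h
    refine ⟨(h 0).1, fun ε hε ↦ ?_⟩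
    obtain ⟨n, hn⟩ := exists_nat_one_div_lt hε
    obtain ⟨x, hx⟩ := (h n).2
    exact ⟨x, hx.trans hn⟩
  · rintro ⟨hT, h⟩ n
    exact ⟨hT, h _ (by positivity)⟩

end Generic

/-- generically, nonexpansive maps almost have fixed points. -/
theorem generic_almost_fixedPoint :
    ∃ O : ℕ → Set (X → X),
      (∀ n, O n ⊆ {T : X → X | Nonexpansive T}) ∧
      (∀ n, ∀ T ∈ O n, ∃ r > (0 : ℝ), ∀ S : X → X, Nonexpansive S → rho S T < r → S ∈ O n) ∧
      (∀ n, ∀ T : X → X, Nonexpansive T → ∀ ε : ℝ, 0 < ε → ∃ S ∈ O n, rho S T < ε) ∧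
      (⋂ n, O n) = {T : X → X | Nonexpansive T ∧
        ∀ ε : ℝ, 0 < ε → ∃ x : X, ‖x - T x‖ < ε} :=
  ⟨fun n ↦ almostFixedNonexpansive (1 / (n + 1)), fun _ _ hT ↦ hT.1,
    fun _ ↦ isRhoOpen_almostFixedNonexpansive _,
    fun _ ↦ isRhoDense_almostFixedNonexpansive (by positivity),
    iInter_almostFixedNonexpansive⟩
end
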